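/- arXiv:2002.00329 — 2 statements merged into one kernel-verified Lean document; each statement's English description precedes it below -/
import Mathlib

section
/- Suppose the mixture of k spherical Gaussians satisfies ‖μ_i* − μ_j*‖ ≥ C (σ_i* ∨ σ_j*) √(log k + log(ρ_σ ρ_π)) for all i ≠ j, for a sufficiently large universal constant C ≥ 64. Then for each q ∈ {0, 1, 2}, Σ_{j≠1} (π_1* + π_j*) (R_{j1}*)^q exp(−(R_{j1}*)²/(64 (σ_1* ∨ σ_j*)²)) ≤ c_q (σ_1*)^q π_1*, where c_0, c_1, c_2 are absolute constants that can be made arbitrarily small by choosing the separation constant C large enough. -/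
open MeasureTheory Real
open scoped BigOperators ENNReal ProbabilityTheory RealInnerProductSpace

/-- The spherical Gaussian measure `N(μ, σ² I_d)` on `ℝ^d`, given by its density
with respect to Lebesgue measure. -/
noncomputable def sphericalGaussian (d : ℕ) (μ : EuclideanSpace ℝ (Fin d)) (σ : ℝ) :
    Measure (EuclideanSpace ℝ (Fin d)) :=
  volume.withDensity fun x =>
    ENNReal.ofReal ((2 * Real.pi * σ ^ 2) ^ (-(d : ℝ) / 2) *
      Real.exp (-‖x - μ‖ ^ 2 / (2 * σ ^ 2)))

/-- The mixture of `k` spherical Gaussians with mixing weights `p`, means `μ`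
and scale factors `σ`. -/
noncomputable def mixture (d k : ℕ) (p : Fin k → ℝ)
    (μ : Fin k → EuclideanSpace ℝ (Fin d)) (σ : Fin k → ℝ) :
    Measure (EuclideanSpace ℝ (Fin d)) :=
  ∑ j : Fin k, ENNReal.ofReal (p j) • sphericalGaussian d (μ j) (σ j)

/-- The EM E-step weight `w_i(x)` for parameters `(p, μ, v)`, where `v i` is the
*variance* (i.e. `σ_i²`) of the `i`-th component. -/
noncomputable def emWeight (d k : ℕ) (p : Fin k → ℝ)
    (μ : Fin k → EuclideanSpace ℝ (Fin d)) (v : Fin k → ℝ) (i : Fin k)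
    (x : EuclideanSpace ℝ (Fin d)) : ℝ :=
  p i * Real.exp (-‖x - μ i‖ ^ 2 / (2 * v i) - (d : ℝ) * Real.log (v i) / 2) /
    ∑ j : Fin k, p j * Real.exp (-‖x - μ j‖ ^ 2 / (2 * v j) - (d : ℝ) * Real.log (v j) / 2)

/-- Maximum of finitely many reals (as an indexed supremum). -/
noncomputable def finSup {k : ℕ} (f : Fin k → ℝ) : ℝ := ⨆ i, f i

/-- Minimum of finitely many reals (as an indexed infimum). -/
noncomputable def finInf {k : ℕ} (f : Fin k → ℝ) : ℝ := ⨅ i, f i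

/-!
Each summand is controlled through `t = R / s` with `s = σ₁ ∨ σⱼ`: since `t ≥ C √L`, the
polynomial factor `t^q` (`q ≤ 2`) is absorbed by half of the Gaussian decay, leaving
`129 e^{-C² L / 128}`. The weight and scale ratios contribute `2 ρ_π ρ_σ²`, and there are fewer
than `k` summands; as `k ρ_π ρ_σ² ≤ e^{2L}` for `L = log k + log (ρ_σ ρ_π) ≥ log 2`, the total is
at most `258 e^{-C²/512} σ₁^q π₁`, which is below `c_q σ₁^q π₁` once `C ≥ 512 ∨ log (258 / c_q)`.
-/

lemma pow_mul_exp_neg_sq_le {q : ℕ} (hq : q ≤ 2) {A t : ℝ} (hA : 0 ≤ A) (ht : A ≤ t) :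
    t ^ q * exp (-t ^ 2 / 64) ≤ 129 * exp (-A ^ 2 / 128) := by
  have ht0 : 0 ≤ t := hA.trans ht
  have hpow : t ^ q ≤ 1 + t ^ 2 := by
    interval_cases q <;> nlinarith [sq_nonneg (t - 1)]
  -- `1 + t² ≤ 129 (1 + t²/128) ≤ 129 e^{t²/128}`
  have hpoly : (1 + t ^ 2) * exp (-t ^ 2 / 128) ≤ 129 := by
    have h := add_one_le_exp (t ^ 2 / 128)
    calc (1 + t ^ 2) * exp (-t ^ 2 / 128)
        ≤ 129 * exp (t ^ 2 / 128) * exp (-t ^ 2 / 128) := by gcongr; nlinarith [sq_nonneg t]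
      _ = 129 := by rw [mul_assoc, ← exp_add, neg_div, add_neg_cancel, exp_zero, mul_one]
  have htail : exp (-t ^ 2 / 128) ≤ exp (-A ^ 2 / 128) := by gcongr
  calc t ^ q * exp (-t ^ 2 / 64)
      ≤ (1 + t ^ 2) * exp (-t ^ 2 / 64) := by gcongr
    _ = (1 + t ^ 2) * exp (-t ^ 2 / 128) * exp (-t ^ 2 / 128) := by
        rw [mul_assoc, ← exp_add]; ring_nf
    _ ≤ 129 * exp (-A ^ 2 / 128) := by gcongr

lemma pow_mul_exp_neg_sq_div_le {q : ℕ} (hq : q ≤ 2) {A R s : ℝ} (hA : 0 ≤ A) (hs : 0 < s)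
    (hR : A * s ≤ R) :
    R ^ q * exp (-R ^ 2 / (64 * s ^ 2)) ≤ 129 * s ^ q * exp (-A ^ 2 / 128) := by
  have ht : A ≤ R / s := (le_div_iff₀ hs).2 hR
  calc R ^ q * exp (-R ^ 2 / (64 * s ^ 2))
      = s ^ q * ((R / s) ^ q * exp (-(R / s) ^ 2 / 64)) := by
        rw [div_pow, div_pow]; field_simp
    _ ≤ s ^ q * (129 * exp (-A ^ 2 / 128)) :=
        mul_le_mul_of_nonneg_left (pow_mul_exp_neg_sq_le hq hA ht) (by positivity)
    _ = 129 * s ^ q * exp (-A ^ 2 / 128) := by ring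

lemma add_mul_pow_mul_exp_neg_sq_div_le {q : ℕ} (hq : q ≤ 2) {π₁ πⱼ ρπ σ₁ s ρσ A R : ℝ}
    (hπ₁ : 0 ≤ π₁) (hπⱼ : πⱼ ≤ ρπ * π₁) (hρπ : 1 ≤ ρπ) (hσ₁ : 0 < σ₁) (hσ₁s : σ₁ ≤ s)
    (hsσ₁ : s ≤ ρσ * σ₁) (hρσ : 1 ≤ ρσ) (hA : 0 ≤ A) (hR : A * s ≤ R) :
    (π₁ + πⱼ) * R ^ q * exp (-R ^ 2 / (64 * s ^ 2)) ≤
      258 * ρπ * ρσ ^ 2 * exp (-A ^ 2 / 128) * (σ₁ ^ q * π₁) := by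
  have hs : 0 < s := hσ₁.trans_le hσ₁s
  have hR0 : 0 ≤ R := by nlinarith
  have hπ : π₁ + πⱼ ≤ 2 * ρπ * π₁ := by nlinarith
  have hsq : s ^ q ≤ ρσ ^ 2 * σ₁ ^ q :=
    calc s ^ q ≤ (ρσ * σ₁) ^ q := by gcongr
      _ = ρσ ^ q * σ₁ ^ q := mul_pow _ _ _
      _ ≤ ρσ ^ 2 * σ₁ ^ q := by gcongr
  calc (π₁ + πⱼ) * R ^ q * exp (-R ^ 2 / (64 * s ^ 2))
      = (π₁ + πⱼ) * (R ^ q * exp (-R ^ 2 / (64 * s ^ 2))) := mul_assoc _ _ _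
    _ ≤ (2 * ρπ * π₁) * (129 * (ρσ ^ 2 * σ₁ ^ q) * exp (-A ^ 2 / 128)) := by
        refine mul_le_mul hπ ?_ (by positivity) (by positivity)
        calc _ ≤ 129 * s ^ q * exp (-A ^ 2 / 128) := pow_mul_exp_neg_sq_div_le hq hA hs hR
          _ ≤ _ := by gcongr
    _ = 258 * ρπ * ρσ ^ 2 * exp (-A ^ 2 / 128) * (σ₁ ^ q * π₁) := by ring

lemma mul_mul_sq_le_exp_two_mul {a b c : ℝ} (ha : 1 ≤ a) (hb : 1 ≤ b) (hc : 1 ≤ c) :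
    a * b * c ^ 2 ≤ exp (2 * (log a + log (c * b))) := by
  have hcb : 0 < c * b := by positivity
  rw [← log_mul (by positivity) hcb.ne', two_mul, exp_add, exp_log (by positivity)]
  have : 1 ≤ a * b := one_le_mul_of_one_le_of_one_le ha hb
  nlinarith [mul_le_mul_of_nonneg_left this (by positivity : (0 : ℝ) ≤ a * b * c ^ 2)]

lemma exp_two_mul_mul_exp_neg_le {C L ε : ℝ} (hε : 0 < ε) (hC : 512 ≤ C) (hCε : -log ε ≤ C)
    (hL : 1 / 2 ≤ L) : exp (2 * L) * exp (-(C ^ 2 * L) / 128) ≤ ε := by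
  -- `2L - C²L/128 ≤ 1 - C²/256 ≤ -C²/512 ≤ -C ≤ log ε`
  have hdecay : 2 * L + -(C ^ 2 * L) / 128 ≤ log ε := by
    nlinarith [mul_nonneg (sub_nonneg.2 hL) (by nlinarith : (0 : ℝ) ≤ C ^ 2 / 128 - 2)]
  calc exp (2 * L) * exp (-(C ^ 2 * L) / 128) ≤ exp (log ε) := by
        rw [← exp_add]; exact exp_le_exp.2 hdecay
    _ = ε := exp_log hε

lemma mul_exp_neg_separation_le {k ρσ ρπ C ε : ℝ} (hk : 2 ≤ k) (hρσ : 1 ≤ ρσ) (hρπ : 1 ≤ ρπ)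
    (hε : 0 < ε) (hC : 512 ≤ C) (hCε : -log ε ≤ C) :
    k * ρπ * ρσ ^ 2 * exp (-(C * √(log k + log (ρσ * ρπ))) ^ 2 / 128) ≤ ε := by
  have hL : 1 / 2 ≤ log k + log (ρσ * ρπ) := by
    have hk2 : log 2 ≤ log k := log_le_log two_pos hk
    have := log_two_gt_d9
    have := log_nonneg (one_le_mul_of_one_le_of_one_le hρσ hρπ)
    linarith
  rw [mul_pow, sq_sqrt (by linarith)]
  calc k * ρπ * ρσ ^ 2 * exp (-(C ^ 2 * (log k + log (ρσ * ρπ))) / 128)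
      ≤ exp (2 * (log k + log (ρσ * ρπ))) * exp (-(C ^ 2 * (log k + log (ρσ * ρπ))) / 128) := by
        gcongr; exact mul_mul_sq_le_exp_two_mul (by linarith) hρπ hρσ
    _ ≤ ε := exp_two_mul_mul_exp_neg_le hε hC hCε hL

section FiniteExtrema

variable {k : ℕ} {f : Fin k → ℝ}

lemma le_finSup (i : Fin k) : f i ≤ finSup f :=
  le_ciSup (Set.finite_range f).bddAbove i

lemma finInf_le (i : Fin k) : finInf f ≤ f i :=
  ciInf_le (Set.finite_range f).bddBelow i

lemma finInf_pos [Nonempty (Fin k)] (hf : ∀ i, 0 < f i) : 0 < finInf f := by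
  obtain ⟨i, hi⟩ := exists_eq_ciInf_of_finite (f := f)
  rw [finInf, ← hi]
  exact hf i

lemma le_finSup_div_finInf_mul (hf : ∀ i, 0 < f i) (i j : Fin k) :
    f j ≤ finSup f / finInf f * f i := by
  have : Nonempty (Fin k) := ⟨i⟩
  have hinf := finInf_pos hf
  calc f j ≤ finSup f := le_finSup j
    _ = finSup f / finInf f * finInf f := (div_mul_cancel₀ _ hinf.ne').symm
    _ ≤ finSup f / finInf f * f i := by
        gcongr
        · exact div_nonneg ((hf i).le.trans (le_finSup i)) hinf.le
        · exact finInf_le i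

lemma one_le_finSup_div_finInf (hf : ∀ i, 0 < f i) (i : Fin k) : 1 ≤ finSup f / finInf f :=
  (le_mul_iff_one_le_left (hf i)).1 (le_finSup_div_finInf_mul hf i i)

end FiniteExtrema

/-- **Lemma: summed weight-error bounds under separation.**
Under the separation `‖μ_i* − μ_j*‖ ≥ C (σ_i* ∨ σ_j*) √(log k + log(ρ_σ ρ_π))` for all
`i ≠ j` (with a large enough universal constant `C ≥ 64`), for each `q ∈ {0,1,2}` the sum
`Σ_{j≠1} (π_1* + π_j*) (R_{j1}*)^q exp(−(R_{j1}*)²/(64 (σ_1* ∨ σ_j*)²))` is at most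
`c_q (σ_1*)^q π_1*`, where the constants `c_q` can be made arbitrarily small by taking the
separation constant `C` large enough. -/
theorem sum_weight_error_bounds (cq : ℝ) (hcq : 0 < cq) :
    ∃ C : ℝ, 64 ≤ C ∧
    ∀ (d k : ℕ), 1 ≤ d → 2 ≤ k →
    ∀ (ps : Fin k → ℝ) (μs : Fin k → EuclideanSpace ℝ (Fin d)) (σs : Fin k → ℝ),
    (∀ i, 0 < ps i) → (∑ i, ps i = 1) → (∀ i, 0 < σs i) →
    (∀ i j, i ≠ j →
      C * max (σs i) (σs j) *
          Real.sqrt (Real.log k + Real.log (finSup σs / finInf σs * (finSup ps / finInf ps)))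
        ≤ ‖μs i - μs j‖) →
    ∀ one : Fin k, (one : ℕ) = 0 →
    ∀ q ∈ ({0, 1, 2} : Finset ℕ),
      ∑ j ∈ Finset.univ.erase one,
          (ps one + ps j) * ‖μs j - μs one‖ ^ q *
            Real.exp (-‖μs j - μs one‖ ^ 2 / (64 * max (σs one) (σs j) ^ 2))
        ≤ cq * σs one ^ q * ps one := by
  set C := max 512 (-log (cq / 258))
  refine ⟨C, le_max_of_le_left (by norm_num), ?_⟩
  intro d k _ hk ps μs σs hps _ hσs hsep one _ q hq
  have hq2 : q ≤ 2 := by simp only [Finset.mem_insert, Finset.mem_singleton] at hq; omega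
  set ρσ := finSup σs / finInf σs
  set ρπ := finSup ps / finInf ps
  set A := C * √(log k + log (ρσ * ρπ))
  have hσ₁ := hσs one
  have hπ₁ := hps one
  have hρσ : 1 ≤ ρσ := one_le_finSup_div_finInf hσs one
  have hρπ : 1 ≤ ρπ := one_le_finSup_div_finInf hps one
  have hσ : ∀ j, σs j ≤ ρσ * σs one := le_finSup_div_finInf_mul hσs one
  set B := 258 * ρπ * ρσ ^ 2 * exp (-A ^ 2 / 128) * (σs one ^ q * ps one)
  have hterm : ∀ j ∈ Finset.univ.erase one, (ps one + ps j) * ‖μs j - μs one‖ ^ q *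
      exp (-‖μs j - μs one‖ ^ 2 / (64 * max (σs one) (σs j) ^ 2)) ≤ B := fun j hj ↦
    add_mul_pow_mul_exp_neg_sq_div_le hq2 hπ₁.le (le_finSup_div_finInf_mul hps one j) hρπ hσ₁
      (le_max_left _ _) (max_le (hσ one) (hσ j)) hρσ (by positivity) (by
        simpa [norm_sub_rev, A, mul_right_comm] using hsep one j (Finset.ne_of_mem_erase hj).symm)
  have hB : 0 ≤ B := by positivity
  have hcard : (Finset.univ.erase one).card ≤ k := by simp
  calc _ ≤ (Finset.univ.erase one).card • B := Finset.sum_le_card_nsmul _ _ _ hterm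
    _ ≤ k • B := nsmul_le_nsmul_left hB hcard
    _ = 258 * (k * ρπ * ρσ ^ 2 * exp (-A ^ 2 / 128)) * (σs one ^ q * ps one) := by
        rw [nsmul_eq_mul]; ring
    _ ≤ 258 * (cq / 258) * (σs one ^ q * ps one) := by
        gcongr
        exact mul_exp_neg_separation_le (by exact_mod_cast hk) hρσ hρπ
          (by positivity) (le_max_left _ _) (le_max_right _ _)
    _ = cq * σs one ^ q * ps one := by ring
end

section
/- Let X be a random vector in R^d, let A ⊆ R^d be a measurable set with p = P(X ∈ A) > 0, let Y have the distribution of X conditioned on {X ∈ A}, and let Z = 1_{X ∈ A}. Let (X_i)_{i=1}^n be i.i.d. copies of X, set Z_i = 1_{X_i ∈ A}, and let (Y_i)_{i=1}^n be i.i.d. copies of Y. Then for every integer 0 ≤ n_e ≤ n and all t_1, t_2 ≥ 0 with t = t_1 + t_2: P( ‖(1/n) Σ_{i=1}^n X_i 1_{X_i ∈ A} − E[X 1_{X ∈ A}]‖ ≥ t ) ≤ max_{m ≤ n_e} P( (1/n) ‖Σ_{i=1}^m (Y_i − E[Y])‖ ≥ t_1 ) + P( ‖E[Y]‖ · |(1/n)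 Σ_{i=1}^n Z_i − p| ≥ t_2 ) + P( Σ_{i=1}^n Z_i ≥ n_e + 1 ). -/
open MeasureTheory Real
open scoped BigOperators ENNReal ProbabilityTheory RealInnerProductSpace

/-!
Write `c = E[Y]`. The centred truncated mean splits as
`n⁻¹ Σ 1_A(X_i) (X_i - c) + (n⁻¹ Σ Z_i - p) c`, so by the triangle inequality the bad event is
covered by the second and third events and by the event that `‖Σ 1_A(X_i) (X_i - c)‖ ≥ n t₁`
while at most `n_e` of the `X_i` lie in `A`. Condition on the set `S` of indices with `X_i ∈ A`:
given `S`, the `(X_i)_{i ∈ S}` are i.i.d. with the law of `Y`, so the part of that event on which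
the index set is `S` has probability
`P(index set = S) · P(‖Σ_{i < #S} (Y_i - c)‖ ≥ n t₁)`. Summing over the
sets with `#S ≤ n_e` bounds it by the maximum.
-/

open Set

namespace MeasureTheory.Measure

variable {ι G : Type*} [Fintype ι] [MeasurableSpace G]

theorem pi_const_smul (ν : Measure G) [IsFiniteMeasure ν] {c : ℝ≥0∞} (hc : c ≠ ∞) :
    Measure.pi (fun _ : ι => c • ν) = c ^ Fintype.card ι • Measure.pi fun _ : ι => ν := by
  have : IsFiniteMeasure (c • ν) := ⟨ENNReal.mul_lt_top hc.lt_top (measure_lt_top ν univ)⟩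
  refine pi_eq fun s _ => ?_
  simp only [smul_apply, smul_eq_mul, pi_pi, Finset.prod_mul_distrib, Finset.prod_const,
    Finset.card_univ]

theorem pi_restrict_preimage {X : ι → Type*} [∀ i, MeasurableSpace (X i)]
    (μ : ∀ i, Measure (X i)) [∀ i, IsProbabilityMeasure (μ i)] (S : Finset ι)
    {W : Set (∀ i : S, X i)} (hW : MeasurableSet W) :
    Measure.pi μ (S.restrict ⁻¹' W) = Measure.pi (fun i : S => μ i) W := by
  rw [← map_apply (Finset.measurable_restrict S) hW, ← infinitePi_eq_pi,
    infinitePi_map_restrict]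

end MeasureTheory.Measure

theorem restrict_eq_smul_cond {Ω : Type*} [MeasurableSpace Ω] {μ : Measure Ω}
    [IsFiniteMeasure μ] {s : Set Ω} (hs : μ s ≠ 0) :
    μ.restrict s = μ s • ProbabilityTheory.cond μ s := by
  rw [ProbabilityTheory.cond, smul_smul, ENNReal.mul_inv_cancel hs (measure_ne_top μ s), one_smul]

section Hits

variable {ι G : Type*} [Fintype ι]

open Classical in
noncomputable def hits (A : Set G) (x : ι → G) : Finset ι :=
  Finset.univ.filter fun i => x i ∈ A

@[simp]
theorem mem_hits {A : Set G} {x : ι → G} {i : ι} : i ∈ hits A x ↔ x i ∈ A := by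
  simp [hits]

theorem hits_preimage_singleton (A : Set G) (S : Finset ι) :
    hits A ⁻¹' {S} = univ.pi fun i => {y | y ∈ A ↔ i ∈ S} := by
  ext x
  simp [Finset.ext_iff, iff_comm]

theorem measurableSet_hits_preimage_singleton [MeasurableSpace G] {A : Set G}
    (hA : MeasurableSet A) (S : Finset ι) : MeasurableSet (hits A ⁻¹' {S}) := by
  rw [hits_preimage_singleton]
  refine .univ_pi fun i => ?_
  by_cases hi : i ∈ S <;> simp only [hi, iff_true, iff_false]
  exacts [hA, hA.compl]

theorem sum_indicator_eq_sum_hits {E : Type*} [AddCommMonoid E] (A : Set G) (f : G → E)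
    (x : ι → G) : ∑ i, A.indicator f (x i) = ∑ i ∈ hits A x, f (x i) := by
  classical
  simp only [hits, Finset.sum_filter, indicator_apply]

theorem sum_indicator_one_eq_card_hits {R : Type*} [AddCommMonoidWithOne R] (A : Set G)
    (x : ι → G) : ∑ i, A.indicator (fun _ => (1 : R)) (x i) = (hits A x).card := by
  simp [sum_indicator_eq_sum_hits]

end Hits

theorem norm_smul_sum_indicator_sub_le {ι E : Type*} [Fintype ι] [NormedAddCommGroup E]
    [NormedSpace ℝ E] (A : Set E) (x : ι → E) (c : E) {a : ℝ} (ha : 0 ≤ a) (p : ℝ) :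
    ‖a • ∑ i, A.indicator id (x i) - p • c‖ ≤
      a * ‖∑ i, A.indicator (· - c) (x i)‖ +
        ‖c‖ * |a * ∑ i, A.indicator (fun _ => (1 : ℝ)) (x i) - p| := by
  have hsplit : ∀ y, A.indicator id y = A.indicator (· - c) y +
      A.indicator (fun _ => (1 : ℝ)) y • c := by
    intro y
    by_cases hy : y ∈ A <;> simp [hy]
  have hdecomp : a • ∑ i, A.indicator id (x i) - p • c =
      a • ∑ i, A.indicator (· - c) (x i) +
        (a * ∑ i, A.indicator (fun _ => (1 : ℝ)) (x i) - p) • c := by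
    simp only [hsplit, Finset.sum_add_distrib, ← Finset.sum_smul, smul_add, sub_smul, smul_smul]
    abel
  rw [hdecomp]
  refine (norm_add_le _ _).trans_eq ?_
  rw [norm_smul, norm_smul, Real.norm_of_nonneg ha, Real.norm_eq_abs, mul_comm ‖c‖]

theorem norm_smul_sum_indicator_sub_trichotomy {ι E : Type*} [Fintype ι]
    [NormedAddCommGroup E] [NormedSpace ℝ E] {A : Set E} {x : ι → E} {c : E} {a : ℝ}
    (ha : 0 ≤ a) {p t1 t2 : ℝ} (ne : ℕ)
    (h : t1 + t2 ≤ ‖a • ∑ i, A.indicator id (x i) - p • c‖) :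
    ((t1 ≤ a * ‖∑ i, A.indicator (· - c) (x i)‖ ∧ (hits A x).card ≤ ne) ∨
        t2 ≤ ‖c‖ * |a * ∑ i, A.indicator (fun _ => (1 : ℝ)) (x i) - p|) ∨
      (ne : ℝ) + 1 ≤ ∑ i, A.indicator (fun _ => (1 : ℝ)) (x i) := by
  have htri := norm_smul_sum_indicator_sub_le A x c ha p
  rw [sum_indicator_one_eq_card_hits] at htri ⊢
  by_contra! hcon
  obtain ⟨⟨h1, h2⟩, h3⟩ := hcon
  have hcard : (hits A x).card ≤ ne := by exact_mod_cast Nat.lt_succ_iff.mp (by exact_mod_cast h3)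
  linarith [lt_of_not_ge fun ht1 => (h1 ht1).not_ge hcard]

section Pattern

variable {ι G : Type*} [Fintype ι] [MeasurableSpace G] {μ ν : Measure G} [IsFiniteMeasure μ]
  {A : Set G}

theorem pi_univ_pi_inter {κ : Type*} [Fintype κ] [IsFiniteMeasure ν]
    (hres : μ.restrict A = μ A • ν) {W : Set (κ → G)} (hW : MeasurableSet W) :
    Measure.pi (fun _ : κ => μ) ((univ.pi fun _ => A) ∩ W) =
      μ A ^ Fintype.card κ * Measure.pi (fun _ : κ => ν) W := by
  rw [inter_comm, ← Measure.restrict_apply hW, Measure.restrict_pi_pi, hres,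
    Measure.pi_const_smul ν (measure_ne_top μ A), Measure.smul_apply, smul_eq_mul]

theorem pi_hits_preimage_inter [IsFiniteMeasure ν] (hA : MeasurableSet A)
    (hres : μ.restrict A = μ A • ν) (S : Finset ι) {W : Set (S → G)} (hW : MeasurableSet W) :
    Measure.pi (fun _ : ι => μ) (hits A ⁻¹' {S} ∩ S.restrict ⁻¹' W) =
      μ A ^ S.card * μ Aᶜ ^ (Fintype.card ι - S.card) * Measure.pi (fun _ : S => ν) W := by
  classical
  have hsplit : hits A ⁻¹' {S} ∩ S.restrict ⁻¹' W =
      MeasurableEquiv.piEquivPiSubtypeProd (fun _ : ι => G) (· ∈ S) ⁻¹'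
        (((univ.pi fun _ => A) ∩ W) ×ˢ univ.pi fun _ => Aᶜ) := by
    ext x
    simp only [hits_preimage_singleton, MeasurableEquiv.piEquivPiSubtypeProd,
      Equiv.piEquivPiSubtypeProd, mem_inter_iff, mem_pi, mem_univ, mem_ofPred_eq,
      forall_const, mem_preimage, mem_prod, mem_compl_iff, MeasurableEquiv.coe_mk,
      Equiv.coe_fn_mk, Subtype.forall]
    constructor
    · rintro ⟨hx, hxW⟩
      exact ⟨⟨fun i hi => (hx i).2 hi, hxW⟩, fun i hi hxi => hi ((hx i).1 hxi)⟩
    · rintro ⟨⟨hin, hxW⟩, hout⟩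
      exact ⟨fun i => ⟨fun hxi => by_contra fun hi => hout i hi hxi, hin i⟩, hxW⟩
  rw [hsplit, (measurePreserving_piEquivPiSubtypeProd (fun _ : ι => μ) (· ∈ S)).measure_preimage
    (((MeasurableSet.univ_pi fun _ => hA).inter hW).prod
      (MeasurableSet.univ_pi fun _ => hA.compl)).nullMeasurableSet,
    Measure.prod_prod, Measure.pi_pi, Finset.prod_const, Finset.card_univ,
    Fintype.card_subtype_compl, Fintype.card_coe, mul_right_comm]
  congr 1
  convert pi_univ_pi_inter (κ := S) hres hW using 3
  exact (Fintype.card_coe S).symm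

theorem pi_hits_preimage_inter_eq_mul [IsProbabilityMeasure ν] (hA : MeasurableSet A)
    (hres : μ.restrict A = μ A • ν) (S : Finset ι) {W : Set (S → G)} (hW : MeasurableSet W) :
    Measure.pi (fun _ : ι => μ) (hits A ⁻¹' {S} ∩ S.restrict ⁻¹' W) =
      Measure.pi (fun _ : ι => μ) (hits A ⁻¹' {S}) * Measure.pi (fun _ : S => ν) W := by
  have hS := pi_hits_preimage_inter hA hres S MeasurableSet.univ
  rw [preimage_univ, inter_univ, measure_univ, mul_one] at hS
  rw [hS, pi_hits_preimage_inter hA hres S hW]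

end Pattern

section SumLaw

variable {G E : Type*} [MeasurableSpace G] [AddCommMonoid E]

theorem pi_sum_mem_congr {κ κ' : Type*} [Fintype κ] [Fintype κ'] (e : κ ≃ κ')
    (ν : Measure G) [SigmaFinite ν] (f : G → E) (U : Set E) :
    Measure.pi (fun _ : κ => ν) {u | ∑ j, f (u j) ∈ U} =
      Measure.pi (fun _ : κ' => ν) {u | ∑ j, f (u j) ∈ U} := by
  rw [← (measurePreserving_piCongrLeft (fun _ : κ' => ν) e).measure_preimage_equiv]
  congr 1
  ext u
  simp only [mem_preimage, mem_ofPred_eq, MeasurableEquiv.coe_piCongrLeft]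
  rw [← e.sum_comp]
  simp only [Equiv.piCongrLeft_apply_apply]

theorem pi_sum_ite_lt_mem [MeasurableSpace E] [MeasurableAdd₂ E] (ν : Measure G)
    [IsProbabilityMeasure ν] {f : G → E} (hf : Measurable f) {U : Set E} (hU : MeasurableSet U)
    {n m : ℕ} (hm : m ≤ n) :
    Measure.pi (fun _ : Fin n => ν) {y | ∑ i : Fin n, (if (i : ℕ) < m then f (y i) else 0) ∈ U} =
      Measure.pi (fun _ : Fin m => ν) {u | ∑ j, f (u j) ∈ U} := by
  set S : Finset (Fin n) := {i | (i : ℕ) < m}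
  have hS : S.card = m := by rw [Fin.card_filter_val_lt, min_eq_right hm]
  have hset : {y : Fin n → G | ∑ i : Fin n, (if (i : ℕ) < m then f (y i) else 0) ∈ U} =
      S.restrict ⁻¹' {u | ∑ j, f (u j) ∈ U} := by
    ext y
    change _ ∈ U ↔ ∑ j : S, f (y j) ∈ U
    rw [Finset.sum_coe_sort S fun i => f (y i), Finset.sum_filter]
  have hW : MeasurableSet {u : S → G | ∑ j, f (u j) ∈ U} :=
    hU.preimage (Finset.measurable_sum _ fun j _ => hf.comp (measurable_pi_apply j))
  rw [hset, Measure.pi_restrict_preimage _ S hW, pi_sum_mem_congr (S.equivFinOfCardEq hS)]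

end SumLaw

theorem pi_sum_indicator_mem_le_iSup {G E : Type*} [MeasurableSpace G] [AddCommMonoid E]
    [MeasurableSpace E] [MeasurableAdd₂ E] {μ ν : Measure G} [IsProbabilityMeasure μ]
    [IsProbabilityMeasure ν] {A : Set G} (hA : MeasurableSet A)
    (hres : μ.restrict A = μ A • ν) {f : G → E} (hf : Measurable f) {U : Set E}
    (hU : MeasurableSet U) (n ne : ℕ) :
    Measure.pi (fun _ : Fin n => μ) {x | ∑ i, A.indicator f (x i) ∈ U ∧ (hits A x).card ≤ ne} ≤
      ⨆ m : Fin (ne + 1), Measure.pi (fun _ : Fin n => ν)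
        {y | ∑ i : Fin n, (if (i : ℕ) < m then f (y i) else 0) ∈ U} := by
  set B := ⨆ m : Fin (ne + 1), Measure.pi (fun _ : Fin n => ν)
    {y | ∑ i : Fin n, (if (i : ℕ) < m then f (y i) else 0) ∈ U}
  let W : ∀ S : Finset (Fin n), Set (S → G) := fun S => {u | ∑ j, f (u j) ∈ U}
  have hW : ∀ S, MeasurableSet (W S) := fun S =>
    hU.preimage (Finset.measurable_sum _ fun j _ => hf.comp (measurable_pi_apply j))
  have hWB : ∀ S : Finset (Fin n), S.card ≤ ne → Measure.pi (fun _ : S => ν) (W S) ≤ B := by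
    intro S hS
    calc Measure.pi (fun _ : S => ν) (W S)
        = Measure.pi (fun _ : Fin S.card => ν) {u | ∑ j, f (u j) ∈ U} :=
          pi_sum_mem_congr S.equivFin ν f U
      _ = _ := (pi_sum_ite_lt_mem ν hf hU (S.card_le_univ.trans_eq (Fintype.card_fin n))).symm
      _ ≤ B := le_iSup_of_le (⟨S.card, Nat.lt_succ_of_le hS⟩ : Fin (ne + 1)) le_rfl
  set T : Finset (Finset (Fin n)) := {S | S.card ≤ ne}
  have hcover : {x | ∑ i, A.indicator f (x i) ∈ U ∧ (hits A x).card ≤ ne} ⊆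
      ⋃ S ∈ T, hits A ⁻¹' {S} ∩ S.restrict ⁻¹' W S := by
    rintro x ⟨hxU, hxT⟩
    refine mem_biUnion (x := hits A x) (by simpa [T] using hxT) ⟨rfl, ?_⟩
    change ∑ j : hits A x, f (x j) ∈ U
    rwa [Finset.sum_coe_sort (hits A x) fun i => f (x i), ← sum_indicator_eq_sum_hits]
  calc _ ≤ Measure.pi (fun _ : Fin n => μ) (⋃ S ∈ T, hits A ⁻¹' {S} ∩ S.restrict ⁻¹' W S) :=
        measure_mono hcover
    _ ≤ ∑ S ∈ T, Measure.pi (fun _ : Fin n => μ) (hits A ⁻¹' {S} ∩ S.restrict ⁻¹' W S) :=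
        measure_biUnion_finset_le T _
    _ = ∑ S ∈ T, Measure.pi (fun _ : Fin n => μ) (hits A ⁻¹' {S}) *
          Measure.pi (fun _ : S => ν) (W S) := by
        simp only [pi_hits_preimage_inter_eq_mul hA hres _ (hW _)]
    _ ≤ ∑ S ∈ T, Measure.pi (fun _ : Fin n => μ) (hits A ⁻¹' {S}) * B := by
        gcongr with S hS
        exact hWB S (by simpa [T] using hS)
    _ = Measure.pi (fun _ : Fin n => μ) (⋃ S ∈ T, hits A ⁻¹' {S}) * B := by
        rw [← Finset.sum_mul, measure_biUnion_finset
          (fun S _ S' _ h => Set.disjoint_singleton.2 h |>.preimage _)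
          fun S _ => measurableSet_hits_preimage_singleton hA S]
    _ ≤ B := mul_le_of_le_one_left zero_le prob_le_one

section IID

variable {Ω ι G : Type*} [MeasurableSpace Ω] [Fintype ι] [MeasurableSpace G] {P : Measure Ω}
  {μ : Measure G} {X : ι → Ω → G}

theorem map_eq_pi_of_iIndepFun (hX : ∀ i, Measurable (X i)) (hlaw : ∀ i, P.map (X i) = μ)
    (hind : ProbabilityTheory.iIndepFun X P) :
    P.map (fun ω i => X i ω) = Measure.pi fun _ => μ := by
  rw [hind.map_fun_eq_pi_map fun i => (hX i).aemeasurable]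
  simp only [hlaw]

theorem measure_preimage_le_pi_of_iIndepFun (hX : ∀ i, Measurable (X i))
    (hlaw : ∀ i, P.map (X i) = μ) (hind : ProbabilityTheory.iIndepFun X P) (D : Set (ι → G)) :
    P {ω | (fun i => X i ω) ∈ D} ≤ Measure.pi (fun _ => μ) D := by
  rw [← map_eq_pi_of_iIndepFun hX hlaw hind]
  exact Measure.le_map_apply (measurable_pi_lambda _ hX).aemeasurable D

theorem measure_preimage_eq_pi_of_iIndepFun (hX : ∀ i, Measurable (X i))
    (hlaw : ∀ i, P.map (X i) = μ) (hind : ProbabilityTheory.iIndepFun X P) {D : Set (ι → G)}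
    (hD : MeasurableSet D) :
    P {ω | (fun i => X i ω) ∈ D} = Measure.pi (fun _ => μ) D := by
  rw [← map_eq_pi_of_iIndepFun hX hlaw hind, Measure.map_apply (measurable_pi_lambda _ hX) hD]
  rfl

end IID

theorem truncated_sum_concentration_decomposition_general
    (d n : ℕ)
    (Ω Ω' : Type) (mΩ : MeasurableSpace Ω) (mΩ' : MeasurableSpace Ω')
    (P : Measure Ω) (P' : Measure Ω')
    (μX : Measure (EuclideanSpace ℝ (Fin d))) (hμX : IsProbabilityMeasure μX)
    (A : Set (EuclideanSpace ℝ (Fin d))) (hA : MeasurableSet A) (hApos : μX A ≠ 0)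
    (X : Fin n → Ω → EuclideanSpace ℝ (Fin d))
    (hXmeas : ∀ i, Measurable (X i))
    (hXlaw : ∀ i, Measure.map (X i) P = μX)
    (hXindep : ProbabilityTheory.iIndepFun
      (m := fun _ : Fin n => (inferInstance : MeasurableSpace (EuclideanSpace ℝ (Fin d)))) X P)
    (Y : Fin n → Ω' → EuclideanSpace ℝ (Fin d))
    (hYmeas : ∀ i, Measurable (Y i))
    (hYlaw : ∀ i, Measure.map (Y i) P' = ProbabilityTheory.cond μX A)
    (hYindep : ProbabilityTheory.iIndepFun
      (m := fun _ : Fin n => (inferInstance : MeasurableSpace (EuclideanSpace ℝ (Fin d)))) Y P')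
    (ne : ℕ) (t1 t2 : ℝ) :
    P {ω | t1 + t2 ≤
        ‖(n : ℝ)⁻¹ • (∑ i, A.indicator id (X i ω)) - ∫ x in A, x ∂μX‖} ≤
      (⨆ m : Fin (ne + 1),
        P' {ω | t1 ≤ (n : ℝ)⁻¹ *
          ‖∑ i : Fin n, if (i : ℕ) < (m : ℕ) then
              Y i ω - ∫ x, x ∂(ProbabilityTheory.cond μX A) else 0‖}) +
      P {ω | t2 ≤ ‖∫ x, x ∂(ProbabilityTheory.cond μX A)‖ *
          |(n : ℝ)⁻¹ * (∑ i, A.indicator (fun _ => (1 : ℝ)) (X i ω)) - (μX A).toReal|} +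
      P {ω | (ne : ℝ) + 1 ≤ ∑ i, A.indicator (fun _ => (1 : ℝ)) (X i ω)} := by
  set ν := ProbabilityTheory.cond μX A
  have : IsProbabilityMeasure ν := ProbabilityTheory.cond_isProbabilityMeasure hApos
  have hres : μX.restrict A = μX A • ν := restrict_eq_smul_cond hApos
  set c := ∫ x, x ∂ν
  set U := {v : EuclideanSpace ℝ (Fin d) | t1 ≤ (n : ℝ)⁻¹ * ‖v‖}
  have hU : MeasurableSet U := measurableSet_le measurable_const (by fun_prop)
  set F := {ω | ∑ i, A.indicator (· - c) (X i ω) ∈ U ∧ (hits A fun i => X i ω).card ≤ ne}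
  have hF : P F ≤ ⨆ m : Fin (ne + 1), P' {ω | t1 ≤ (n : ℝ)⁻¹ *
      ‖∑ i : Fin n, if (i : ℕ) < (m : ℕ) then Y i ω - c else 0‖} :=
    (measure_preimage_le_pi_of_iIndepFun hXmeas hXlaw hXindep
      {x | ∑ i, A.indicator (· - c) (x i) ∈ U ∧ (hits A x).card ≤ ne}).trans <|
    (pi_sum_indicator_mem_le_iSup hA hres (by fun_prop) hU n ne).trans_eq <|
    iSup_congr fun m => (measure_preimage_eq_pi_of_iIndepFun hYmeas hYlaw hYindep <|
      hU.preimage <| Finset.measurable_sum _ fun i _ => by split_ifs <;> fun_prop).symm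
  have hcover : {ω | t1 + t2 ≤
      ‖(n : ℝ)⁻¹ • (∑ i, A.indicator id (X i ω)) - ∫ x in A, x ∂μX‖} ⊆
      F ∪ {ω | t2 ≤ ‖c‖ *
          |(n : ℝ)⁻¹ * (∑ i, A.indicator (fun _ => (1 : ℝ)) (X i ω)) - (μX A).toReal|} ∪
      {ω | (ne : ℝ) + 1 ≤ ∑ i, A.indicator (fun _ => (1 : ℝ)) (X i ω)} := fun ω hω =>
    norm_smul_sum_indicator_sub_trichotomy (by positivity) ne <| by
      rwa [hres, integral_smul_measure] at hω
  calc _ ≤ _ := measure_mono hcover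
    _ ≤ _ := (measure_union_le _ _).trans (add_le_add_left (measure_union_le _ _) _)
    _ ≤ _ := by gcongr

/-- **Proposition: decomposition of concentration for truncated sums.**
Let `X` be a random vector with law `μX`, `A` a measurable set with `p = P(X ∈ A) > 0`,
`Y` distributed as `X` conditioned on `A`, `Z = 1_{X ∈ A}`. For i.i.d. copies
`(X_i)_{i=1}^n` (on `Ω`) and `(Y_i)_{i=1}^n` (on `Ω'`), every `0 ≤ n_e ≤ n` and
`t₁, t₂ ≥ 0` with `t = t₁ + t₂`:
`P(‖(1/n)Σ X_i 1_{X_i∈A} − E[X 1_{X∈A}]‖ ≥ t) ≤ max_{m ≤ n_e} P((1/n)‖Σ_{i≤m}(Y_i−E[Y])‖ ≥ t₁)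
 + P(‖E[Y]‖ |(1/n)Σ Z_i − p| ≥ t₂) + P(Σ Z_i ≥ n_e + 1)`. -/
theorem truncated_sum_concentration_decomposition
    (d n : ℕ)
    (Ω Ω' : Type) (mΩ : MeasurableSpace Ω) (mΩ' : MeasurableSpace Ω')
    (P : Measure Ω) (P' : Measure Ω')
    (hP : IsProbabilityMeasure P) (hP' : IsProbabilityMeasure P')
    (μX : Measure (EuclideanSpace ℝ (Fin d))) (hμX : IsProbabilityMeasure μX)
    (A : Set (EuclideanSpace ℝ (Fin d))) (hA : MeasurableSet A) (hApos : μX A ≠ 0)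
    (X : Fin n → Ω → EuclideanSpace ℝ (Fin d))
    (hXmeas : ∀ i, Measurable (X i))
    (hXlaw : ∀ i, Measure.map (X i) P = μX)
    (hXindep : ProbabilityTheory.iIndepFun
      (m := fun _ : Fin n => (inferInstance : MeasurableSpace (EuclideanSpace ℝ (Fin d)))) X P)
    (Y : Fin n → Ω' → EuclideanSpace ℝ (Fin d))
    (hYmeas : ∀ i, Measurable (Y i))
    (hYlaw : ∀ i, Measure.map (Y i) P' = ProbabilityTheory.cond μX A)
    (hYindep : ProbabilityTheory.iIndepFun
      (m := fun _ : Fin n => (inferInstance : MeasurableSpace (EuclideanSpace ℝ (Fin d)))) Y P')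
    (ne : ℕ) (hne : ne ≤ n) (t1 t2 : ℝ) (ht1 : 0 ≤ t1) (ht2 : 0 ≤ t2) :
    P {ω | t1 + t2 ≤
        ‖(n : ℝ)⁻¹ • (∑ i, A.indicator id (X i ω)) - ∫ x in A, x ∂μX‖} ≤
      (⨆ m : Fin (ne + 1),
        P' {ω | t1 ≤ (n : ℝ)⁻¹ *
          ‖∑ i : Fin n, if (i : ℕ) < (m : ℕ) then
              Y i ω - ∫ x, x ∂(ProbabilityTheory.cond μX A) else 0‖}) +
      P {ω | t2 ≤ ‖∫ x, x ∂(ProbabilityTheory.cond μX A)‖ *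
          |(n : ℝ)⁻¹ * (∑ i, A.indicator (fun _ => (1 : ℝ)) (X i ω)) - (μX A).toReal|} +
      P {ω | (ne : ℝ) + 1 ≤ ∑ i, A.indicator (fun _ => (1 : ℝ)) (X i ω)} :=
  truncated_sum_concentration_decomposition_general d n Ω Ω' mΩ mΩ' P P' μX hμX A hA hApos X hXmeas
    hXlaw hXindep Y hYmeas hYlaw hYindep ne t1 t2
end
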